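/- Let G be a labelled acyclic directed multigraph and X_1, X_2, Y = V(G)\setminus(X_1 \cup X_2) three disjoint nonempty subsets of V(G). Suppose: (i) each largest set of equally-labelled arcs of [X_1,Y] arc-induces a complete bipartite subgraph of G; (ii) each largest set of equally-labelled arcs of [Y,X_2] arc-induces a complete bipartite subgraph of G; (iii) no label of an arc of [X_1,X_2] occurs on any arc of [X_1,Y] \cup [Y,X_2]; (iv) the arcs of G/X_1/X_2 and G/Y corresponding to arcs of [X_1,Y] \cup [Y,X_2] \cup [X_1,X_2] are the only synchronising arcs of G/X_1/X_2 and G/Y; (v) all in-degree-0 vertices of G lie in X_1; (vi) [X_1,Y], [Y,X_2], [X_1,X_2] have no backward arcs. Then G is isomorphic to (G/Y) \boxbackslash (G/X_1/X_2). -/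

import Mathlib

/-- A labelled directed multigraph: vertex type `V`, arc type `A`, label type `L`,
incidence function `mu` giving (tail, head), and arc labelling `lab`. -/
structure LDMG (V A L : Type) where
  mu : A → V × V
  lab : A → L

namespace LDMG

variable {V A L V' A' : Type}

/-- The one-step arc relation. -/
def step (G : LDMG V A L) (u v : V) : Prop := ∃ a, G.mu a = (u, v)

/-- `G` is acyclic: no directed cycle. -/
def Acyclic (G : LDMG V A L) : Prop := ∀ v, ¬ Relation.TransGen G.step v v

/-- `v` has in-degree 0 in `G`. -/
def InDegZero (G : LDMG V A L) (v : V) : Prop := ∀ a, (G.mu a).2 ≠ v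

/-- `v` has out-degree 0 in `G`. -/
def OutDegZero (G : LDMG V A L) (v : V) : Prop := ∀ a, (G.mu a).1 ≠ v

/-- `peel G n`: the set of vertices deleted after `n` rounds of repeatedly removing the
vertices of in-degree 0 (together with the arcs with tails there). -/
def peel (G : LDMG V A L) : ℕ → Set V
  | 0 => ∅
  | n + 1 => peel G n ∪ {v | ∀ a, (G.mu a).2 = v → (G.mu a).1 ∈ peel G n}

/-- The level set `S^n(G)`. -/
def levelSet (G : LDMG V A L) (n : ℕ) : Set V := peel G (n + 1) \ peel G n

/-- Vertex type of the contraction `G/X`: the vertices outside `X` together with one new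
vertex (`Sum.inr ()`) replacing `X`. -/
def CVertex (X : Set V) : Type := {v : V // v ∉ X} ⊕ Unit

/-- Canonical projection of vertices to contraction vertices. -/
noncomputable def cMap (X : Set V) (v : V) : CVertex X :=
  haveI := Classical.propDecidable (v ∈ X)
  if h : v ∈ X then Sum.inr () else Sum.inl ⟨v, h⟩

/-- The arcs of `G` surviving the contraction of `X` (i.e. not having both ends in `X`),
before identification of parallel equally-labelled arcs. -/
def CPre (G : LDMG V A L) (X : Set V) : Type :=
  {a : A // ¬ ((G.mu a).1 ∈ X ∧ (G.mu a).2 ∈ X)}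

noncomputable def cKey (G : LDMG V A L) (X : Set V) (a : CPre G X) :
    (CVertex X × CVertex X) × L :=
  ((cMap X (G.mu a.1).1, cMap X (G.mu a.1).2), G.lab a.1)

/-- Arc type of `G/X`: surviving arcs, with arcs having identical tail, head and label
identified. -/
def CArc (G : LDMG V A L) (X : Set V) : Type :=
  Quotient (Setoid.ker (cKey G X))

/-- The contraction `G/X`. -/
noncomputable def contract (G : LDMG V A L) (X : Set V) : LDMG (CVertex X) (CArc G X) L where
  mu := Quotient.lift (fun a => (cKey G X a).1) (fun _ _ h => congrArg Prod.fst h)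
  lab := Quotient.lift (fun a => (cKey G X a).2) (fun _ _ h => congrArg Prod.snd h)

/-- The Cartesian product `G □ H`. -/
def box (G : LDMG V A L) (H : LDMG V' A' L) : LDMG (V × V') (A × V' ⊕ V × A') L where
  mu := fun x =>
    match x with
    | Sum.inl (a, w) => (((G.mu a).1, w), ((G.mu a).2, w))
    | Sum.inr (u, b) => ((u, (H.mu b).1), (u, (H.mu b).2))
  lab := fun x =>
    match x with
    | Sum.inl (a, _) => G.lab a
    | Sum.inr (_, b) => H.lab b

/-- The label `ℓ` occurs in `G`. -/
def HasLab (G : LDMG V A L) (ℓ : L) : Prop := ∃ a, G.lab a = ℓ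

/-- Arc type of the intermediate product `G ⊠ H`: asynchronous copies of arcs of `G`
(whose label does not occur in `H`), asynchronous copies of arcs of `H` (whose label
does not occur in `G`), and synchronous arcs for pairs of equally labelled arcs. -/
def InterArc (G : LDMG V A L) (H : LDMG V' A' L) : Type :=
  {p : A × V' // ¬ H.HasLab (G.lab p.1)} ⊕
  {p : V × A' // ¬ G.HasLab (H.lab p.2)} ⊕
  {p : A × A' // G.lab p.1 = H.lab p.2}

/-- The intermediate product `G ⊠ H`. -/
def inter (G : LDMG V A L) (H : LDMG V' A' L) : LDMG (V × V') (InterArc G H) L where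
  mu := fun x =>
    match x with
    | Sum.inl ⟨(a, w), _⟩ => (((G.mu a).1, w), ((G.mu a).2, w))
    | Sum.inr (Sum.inl ⟨(u, b), _⟩) => ((u, (H.mu b).1), (u, (H.mu b).2))
    | Sum.inr (Sum.inr ⟨(a, b), _⟩) => (((G.mu a).1, (H.mu b).1), ((G.mu a).2, (H.mu b).2))
  lab := fun x =>
    match x with
    | Sum.inl ⟨(a, _), _⟩ => G.lab a
    | Sum.inr (Sum.inl ⟨(_, b), _⟩) => H.lab b
    | Sum.inr (Sum.inr ⟨(a, _), _⟩) => G.lab a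

/-- `v` has positive level in `G □ H`, i.e. some in-arc in the Cartesian product. -/
def PosLevelBox (G : LDMG V A L) (H : LDMG V' A' L) (v : V × V') : Prop :=
  ∃ x, ((G.box H).mu x).2 = v

/-- The set of vertices removed after `n` rounds of the VRSP removal process: repeatedly
remove the vertices having in-degree 0 in the current graph but positive level in `G □ H`
(together with their out-arcs). -/
def vrspRem (G : LDMG V A L) (H : LDMG V' A' L) : ℕ → Set (V × V')
  | 0 => ∅
  | n + 1 => vrspRem G H n ∪
      {v | PosLevelBox G H v ∧
        ∀ x, ((G.inter H).mu x).2 = v → ((G.inter H).mu x).1 ∈ vrspRem G H n}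

/-- All vertices eventually removed in the VRSP removal process. -/
def vrspRemoved (G : LDMG V A L) (H : LDMG V' A' L) : Set (V × V') := ⋃ n, vrspRem G H n

/-- Vertex type of the vertex-removing synchronised product `G ⊟ H`. -/
def VrspV (G : LDMG V A L) (H : LDMG V' A' L) : Type := {v : V × V' // v ∉ vrspRemoved G H}

/-- Arc type of `G ⊟ H`: arcs of `G ⊠ H` with both ends surviving. -/
def VrspArc (G : LDMG V A L) (H : LDMG V' A' L) : Type :=
  {x : InterArc G H // ((G.inter H).mu x).1 ∉ vrspRemoved G H ∧
    ((G.inter H).mu x).2 ∉ vrspRemoved G H}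

/-- The vertex-removing synchronised product `G ⊟ H`. -/
def vrsp (G : LDMG V A L) (H : LDMG V' A' L) : LDMG (VrspV G H) (VrspArc G H) L where
  mu := fun x => (⟨((G.inter H).mu x.1).1, x.2.1⟩, ⟨((G.inter H).mu x.1).2, x.2.2⟩)
  lab := fun x => (G.inter H).lab x.1

/-- Isomorphism of labelled directed multigraphs: a vertex bijection preserving the
existence of arcs together with their labels. -/
def Iso (G : LDMG V A L) {V' A' : Type} (H : LDMG V' A' L) : Prop :=
  ∃ φ : V ≃ V', ∀ u v ℓ,
    (∃ a, G.mu a = (u, v) ∧ G.lab a = ℓ) ↔ (∃ b, H.mu b = (φ u, φ v) ∧ H.lab b = ℓ)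

end LDMG

/-- The image of `X₂` inside the vertex set of `G/X₁`. -/
def LDMG.imgIn {V : Type} (X1 X2 : Set V) : Set (LDMG.CVertex X1) :=
  {w | ∃ v : V, ∃ h : v ∉ X1, v ∈ X2 ∧ w = Sum.inl ⟨v, h⟩}

/-!
The map `v ↦ (cMap Y v, cMapPair X₁ X₂ v)` identifies `G` with what survives of
`(G/Y) ⊠ (G/X₁/X₂)`. By (iv), an arc inside `X₁` or `X₂` carries a label absent from `G/X₁/X₂`
and becomes an asynchronous arc of `G/Y`, an arc inside `Y` becomes an asynchronous arc of
`G/X₁/X₂`, and every other arc `a` becomes the synchronous pair `(a, a)`. Conversely, an arc of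
the intermediate product leaving an image vertex comes from an arc of `G` and ends at an image
vertex: for a synchronous pair `(c₁, c₂)`, (iii), (vi) and the position of the tail put `c₁` and
`c₂` into the same one of `[X₁,Y]`, `[Y,X₂]`, `[X₁,X₂]`, and (i), (ii) supply the arc of `G`.

So image vertices are never removed: each has an in-arc from an image vertex, or is a source
`u ∈ X₁` (by (v)), and then `(u, x̃₁)` has level 0 in `G/Y □ G/X₁/X₂`. Every other vertex has
positive level and only non-image in-neighbours, so the removal process deletes them all, in the
order of a grading of the product; the factors are graded because, by (vi), arcs between the
parts only go from `X₁` to `Y` to `X₂`.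
-/

namespace LDMG

variable {V A L : Type}

section Basic

variable (G : LDMG V A L)

def FromTo (X Z : Set V) (a : A) : Prop := (G.mu a).1 ∈ X ∧ (G.mu a).2 ∈ Z

def IsGrading (r : V → ℕ) : Prop := ∀ a, r (G.mu a).1 < r (G.mu a).2

end Basic

theorem exists_isGrading [Finite V] {G : LDMG V A L} (hG : G.Acyclic) :
    ∃ r : V → ℕ, G.IsGrading r := by
  refine ⟨fun v => {u | Relation.TransGen G.step u v}.ncard, fun a => ?_⟩
  refine Set.ncard_lt_ncard ⟨fun u hu => Relation.TransGen.tail hu ⟨a, rfl⟩, fun hsub => ?_⟩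
  exact hG _ (hsub (Relation.TransGen.single ⟨a, rfl⟩))

theorem IsGrading.exists_arc_into {G : LDMG V A L} {r : V → ℕ} (hr : G.IsGrading r)
    {S : Set V} (hS : S.Nonempty) (hsrc : ∀ v ∈ S, ¬ G.InDegZero v) :
    ∃ a, (G.mu a).1 ∉ S ∧ (G.mu a).2 ∈ S := by
  obtain ⟨m, hmS, hmin⟩ := (InvImage.wf r wellFounded_lt).has_min S hS
  obtain ⟨a, ha⟩ : ∃ a, (G.mu a).2 = m := by simpa [InDegZero] using hsrc m hmS
  exact ⟨a, fun h => hmin _ h (ha ▸ hr a), ha ▸ hmS⟩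

section Contraction

variable {X : Set V} {u v : V}

theorem cMap_of_mem (h : v ∈ X) : cMap X v = Sum.inr () := dif_pos h

theorem cMap_of_notMem (h : v ∉ X) : cMap X v = Sum.inl ⟨v, h⟩ := dif_neg h

theorem cMap_eq_cMap_iff : cMap X u = cMap X v ↔ (u ∈ X ∧ v ∈ X) ∨ u = v := by
  by_cases hu : u ∈ X <;> by_cases hv : v ∈ X
  · exact iff_of_true (by rw [cMap_of_mem hu, cMap_of_mem hv]) (Or.inl ⟨hu, hv⟩)
  · rw [cMap_of_mem hu, cMap_of_notMem hv]
    exact iff_of_false Sum.inr_ne_inl (by rintro (⟨-, h⟩ | rfl) <;> contradiction)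
  · rw [cMap_of_notMem hu, cMap_of_mem hv]
    exact iff_of_false Sum.inl_ne_inr (by rintro (⟨h, -⟩ | rfl) <;> contradiction)
  · rw [cMap_of_notMem hu, cMap_of_notMem hv]
    refine ⟨fun h => Or.inr (congrArg Subtype.val (Sum.inl_injective h)), ?_⟩
    rintro (⟨h, -⟩ | rfl)
    exacts [absurd h hu, rfl]

theorem eq_of_cMap_eq (hu : u ∉ X) (h : cMap X u = cMap X v) : u = v :=
  (cMap_eq_cMap_iff.mp h).resolve_left fun h' => hu h'.1

theorem mem_of_cMap_eq (hu : u ∈ X) (h : cMap X u = cMap X v) : v ∈ X :=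
  (cMap_eq_cMap_iff.mp h).elim And.right (· ▸ hu)

theorem cMap_eq_inr_iff : cMap X v = Sum.inr () ↔ v ∈ X := by
  by_cases hv : v ∈ X
  · exact iff_of_true (cMap_of_mem hv) hv
  · rw [cMap_of_notMem hv]
    exact iff_of_false Sum.inl_ne_inr hv

def CVertex.lift (f : V → ℕ) (k : ℕ) : CVertex X → ℕ := Sum.elim (fun w => f w.1) fun _ => k

theorem CVertex.lift_cMap {f : V → ℕ} {k : ℕ} (hf : ∀ v ∈ X, f v = k) (v : V) :
    CVertex.lift f k (cMap X v) = f v := by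
  by_cases hv : v ∈ X
  · rw [cMap_of_mem hv, hf v hv]; rfl
  · rw [cMap_of_notMem hv]; rfl

variable {G : LDMG V A L}

theorem exists_contract_arc (α : CArc G X) :
    ∃ a : A, ∃ h : ¬ G.FromTo X X a, α = Quotient.mk _ ⟨a, h⟩ := by
  obtain ⟨⟨a, h⟩, rfl⟩ := Quotient.exists_rep α
  exact ⟨a, h, rfl⟩

theorem contract_hasLab_iff {ℓ : L} :
    (G.contract X).HasLab ℓ ↔ ∃ a, ¬ G.FromTo X X a ∧ G.lab a = ℓ := by
  constructor
  · rintro ⟨α, rfl⟩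
    obtain ⟨a, h, rfl⟩ := exists_contract_arc α
    exact ⟨a, h, rfl⟩
  · rintro ⟨a, h, rfl⟩
    exact ⟨Quotient.mk _ ⟨a, h⟩, rfl⟩

theorem not_inDegZero_contract {a : A} (ha : ¬ G.FromTo X X a) :
    ¬ (G.contract X).InDegZero (cMap X (G.mu a).2) :=
  fun h => h (Quotient.mk _ ⟨a, ha⟩) rfl

theorem InDegZero.contract (hv : G.InDegZero v) (hvX : v ∉ X) :
    (G.contract X).InDegZero (cMap X v) := by
  intro α
  obtain ⟨a, -, rfl⟩ := exists_contract_arc α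
  intro hα
  rcases cMap_eq_cMap_iff.mp hα with ⟨-, h⟩ | h
  exacts [hvX h, hv a h]

theorem isGrading_contract {r : CVertex X → ℕ}
    (hr : ∀ a, ¬ G.FromTo X X a → r (cMap X (G.mu a).1) < r (cMap X (G.mu a).2)) :
    (G.contract X).IsGrading r := by
  intro α
  obtain ⟨a, h, rfl⟩ := exists_contract_arc α
  exact hr a h

end Contraction

section Product

variable {V' A' : Type}

variable {G : LDMG V A L} {H : LDMG V' A' L}

theorem posLevelBox_iff {p : V} {q : V'} :
    PosLevelBox G H (p, q) ↔ ¬ G.InDegZero p ∨ ¬ H.InDegZero q := by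
  simp only [PosLevelBox, InDegZero, not_forall, not_not]
  constructor
  · rintro ⟨⟨a, w⟩ | ⟨u, b⟩, hx⟩
    · exact Or.inl ⟨a, congrArg Prod.fst hx⟩
    · exact Or.inr ⟨b, congrArg Prod.snd hx⟩
  · rintro (⟨a, rfl⟩ | ⟨b, rfl⟩)
    exacts [⟨Sum.inl (a, q), rfl⟩, ⟨Sum.inr (p, b), rfl⟩]

theorem IsGrading.inter {r₁ : V → ℕ} {r₂ : V' → ℕ} (h₁ : G.IsGrading r₁)
    (h₂ : H.IsGrading r₂) : (G.inter H).IsGrading fun z => r₁ z.1 + r₂ z.2 := by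
  rintro (⟨⟨a, w⟩, -⟩ | ⟨⟨u, b⟩, -⟩ | ⟨⟨a, b⟩, -⟩)
  · exact Nat.add_lt_add_right (h₁ a) _
  · exact Nat.add_lt_add_left (h₂ b) _
  · exact Nat.add_lt_add (h₁ a) (h₂ b)

/-- Along the grading, each vertex of `S` is removed one round after its in-neighbours. -/
theorem subset_vrspRemoved {S : Set (V × V')} {r : V × V' → ℕ}
    (hr : (G.inter H).IsGrading r) (hpos : ∀ z ∈ S, PosLevelBox G H z)
    (hS : ∀ x, ((G.inter H).mu x).2 ∈ S → ((G.inter H).mu x).1 ∈ S) :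
    S ⊆ vrspRemoved G H := by
  suffices ∀ n, ∀ z ∈ S, r z < n → z ∈ vrspRem G H n from
    fun z hz => Set.mem_iUnion.mpr ⟨_, this _ z hz (Nat.lt_succ_self _)⟩
  intro n
  induction n with
  | zero => exact fun z _ hz => absurd hz (Nat.not_lt_zero _)
  | succ n ih =>
    refine fun z hz hzn => Or.inr ⟨hpos z hz, fun x hx => ih _ (hS x (hx ▸ hz)) ?_⟩
    have := hr x
    rw [hx] at this
    omega

theorem disjoint_vrspRemoved {S : Set (V × V')}
    (hS : ∀ z ∈ S, PosLevelBox G H z →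
      ∃ x, ((G.inter H).mu x).2 = z ∧ ((G.inter H).mu x).1 ∈ S) :
    Disjoint S (vrspRemoved G H) := by
  suffices ∀ n, ∀ z ∈ S, z ∉ vrspRem G H n by
    refine Set.disjoint_left.mpr fun z hz hrem => ?_
    obtain ⟨n, hn⟩ := Set.mem_iUnion.mp hrem
    exact this n z hz hn
  intro n
  induction n with
  | zero => exact fun _ _ h => h
  | succ n ih =>
    rintro z hz (h | ⟨hpos, hin⟩)
    · exact ih z hz h
    · obtain ⟨x, hx, hxS⟩ := hS z hz hpos
      exact ih _ hxS (hin x hx)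

theorem exists_vrsp_arc_iff {z w : V × V'} (hz : z ∉ vrspRemoved G H)
    (hw : w ∉ vrspRemoved G H) {ℓ : L} :
    (∃ b, (G.vrsp H).mu b = (⟨z, hz⟩, ⟨w, hw⟩) ∧ (G.vrsp H).lab b = ℓ) ↔
      ∃ x, (G.inter H).mu x = (z, w) ∧ (G.inter H).lab x = ℓ := by
  constructor
  · rintro ⟨⟨x, _, _⟩, hx, hl⟩
    exact ⟨x, Prod.ext (congrArg (fun p => Subtype.val p.1) hx)
      (congrArg (fun p => Subtype.val p.2) hx), hl⟩
  · rintro ⟨x, hx, hl⟩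
    refine ⟨⟨x, hx ▸ hz, hx ▸ hw⟩, ?_, hl⟩
    simp only [vrsp, hx]

end Product

section PairContraction

variable {G : LDMG V A L} {X1 X2 : Set V} {u v : V}

noncomputable abbrev contractPair (G : LDMG V A L) (X1 X2 : Set V) :
    LDMG (CVertex (imgIn X1 X2)) (CArc (G.contract X1) (imgIn X1 X2)) L :=
  (G.contract X1).contract (imgIn X1 X2)

noncomputable def cMapPair (X1 X2 : Set V) (v : V) : CVertex (imgIn X1 X2) :=
  cMap (imgIn X1 X2) (cMap X1 v)

/-- The vertex `x̃₁` of `G/X₁/X₂` into which `X₁` is contracted. -/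
noncomputable def xTilde₁ (X1 X2 : Set V) : CVertex (imgIn X1 X2) :=
  cMap (imgIn X1 X2) (Sum.inr () : CVertex X1)

theorem inr_notMem_imgIn : (Sum.inr () : CVertex X1) ∉ imgIn X1 X2 := by
  rintro ⟨v, h, -, hv⟩
  cases hv

theorem cMap_mem_imgIn_iff (hd : Disjoint X1 X2) : cMap X1 v ∈ imgIn X1 X2 ↔ v ∈ X2 := by
  by_cases h1 : v ∈ X1
  · rw [cMap_of_mem h1]
    exact iff_of_false inr_notMem_imgIn (Set.disjoint_left.mp hd h1)
  · rw [cMap_of_notMem h1]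
    refine ⟨?_, fun h2 => ⟨v, h1, h2, rfl⟩⟩
    rintro ⟨w, hw1, hw, hvw⟩
    obtain rfl : v = w := congrArg Subtype.val (Sum.inl_injective hvw)
    exact hw

theorem cMapPair_eq_iff (hd : Disjoint X1 X2) :
    cMapPair X1 X2 u = cMapPair X1 X2 v ↔ (u ∈ X1 ∧ v ∈ X1) ∨ (u ∈ X2 ∧ v ∈ X2) ∨ u = v := by
  rw [cMapPair, cMapPair, cMap_eq_cMap_iff, cMap_mem_imgIn_iff hd, cMap_mem_imgIn_iff hd,
    cMap_eq_cMap_iff]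
  tauto

theorem cMapPair_eq_xTilde₁_iff :
    cMapPair X1 X2 v = xTilde₁ X1 X2 ↔ v ∈ X1 := by
  refine cMap_eq_cMap_iff.trans ?_
  exact (or_iff_right fun h => inr_notMem_imgIn h.2).trans cMap_eq_inr_iff

theorem cMapPair_eq_inr_iff (hd : Disjoint X1 X2) : cMapPair X1 X2 v = Sum.inr () ↔ v ∈ X2 := by
  rw [cMapPair, cMap_eq_inr_iff, cMap_mem_imgIn_iff hd]

theorem eq_of_cMapPair_eq (hd : Disjoint X1 X2) (h₁ : u ∉ X1) (h₂ : u ∉ X2)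
    (h : cMapPair X1 X2 u = cMapPair X1 X2 v) : u = v :=
  (((cMapPair_eq_iff hd).mp h).resolve_left fun h' => h₁ h'.1).resolve_left fun h' => h₂ h'.1

theorem mem_X1_of_cMapPair_eq (hu : u ∈ X1) (h : cMapPair X1 X2 u = cMapPair X1 X2 v) : v ∈ X1 :=
  cMapPair_eq_xTilde₁_iff.mp (h ▸ cMapPair_eq_xTilde₁_iff.mpr hu)

theorem exists_arc_of_contractPair_arc (hd : Disjoint X1 X2)
    (β : CArc (G.contract X1) (imgIn X1 X2)) :
    ∃ a, ¬ G.FromTo X1 X1 a ∧ ¬ G.FromTo X2 X2 a ∧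
      (G.contractPair X1 X2).mu β = (cMapPair X1 X2 (G.mu a).1, cMapPair X1 X2 (G.mu a).2) ∧
      (G.contractPair X1 X2).lab β = G.lab a := by
  obtain ⟨α, hα, rfl⟩ := exists_contract_arc β
  obtain ⟨a, ha, rfl⟩ := exists_contract_arc α
  refine ⟨a, ha, fun h => hα ?_, rfl, rfl⟩
  exact ⟨(cMap_mem_imgIn_iff hd).mpr h.1, (cMap_mem_imgIn_iff hd).mpr h.2⟩

theorem exists_contractPair_arc_of_arc (hd : Disjoint X1 X2) {a : A}
    (h1 : ¬ G.FromTo X1 X1 a) (h2 : ¬ G.FromTo X2 X2 a) :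
    ∃ β, (G.contractPair X1 X2).mu β = (cMapPair X1 X2 (G.mu a).1, cMapPair X1 X2 (G.mu a).2) ∧
      (G.contractPair X1 X2).lab β = G.lab a :=
  ⟨Quotient.mk _ ⟨Quotient.mk _ ⟨a, h1⟩, fun h =>
    h2 ⟨(cMap_mem_imgIn_iff hd).mp h.1, (cMap_mem_imgIn_iff hd).mp h.2⟩⟩, rfl, rfl⟩

theorem contractPair_hasLab_iff (hd : Disjoint X1 X2) {ℓ : L} :
    (G.contractPair X1 X2).HasLab ℓ ↔
      ∃ a, ¬ G.FromTo X1 X1 a ∧ ¬ G.FromTo X2 X2 a ∧ G.lab a = ℓ := by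
  constructor
  · rintro ⟨β, rfl⟩
    obtain ⟨a, h1, h2, -, hl⟩ := exists_arc_of_contractPair_arc hd β
    exact ⟨a, h1, h2, hl.symm⟩
  · rintro ⟨a, h1, h2, rfl⟩
    obtain ⟨β, -, hl⟩ := exists_contractPair_arc_of_arc hd h1 h2
    exact ⟨β, hl⟩

theorem inDegZero_xTilde₁ (hd : Disjoint X1 X2)
    (hX1 : ∀ a, (G.mu a).2 ∈ X1 → (G.mu a).1 ∈ X1) :
    (G.contractPair X1 X2).InDegZero (xTilde₁ X1 X2) := by
  intro β
  obtain ⟨a, ha, -, hmu, -⟩ := exists_arc_of_contractPair_arc hd β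
  rw [hmu]
  intro h
  have h2 := cMapPair_eq_xTilde₁_iff.mp h
  exact ha ⟨hX1 a h2, h2⟩

end PairContraction

noncomputable def embed (X1 X2 Y : Set V) (v : V) : CVertex Y × CVertex (imgIn X1 X2) :=
  (cMap Y v, cMapPair X1 X2 v)

theorem embed_injective {X1 X2 Y : Set V} (hd : Disjoint X1 X2) (hY : Y = (X1 ∪ X2)ᶜ) :
    Function.Injective (embed X1 X2 Y) := by
  intro u v huv
  have h1 := cMap_eq_cMap_iff.mp (congrArg Prod.fst huv)
  have h2 := (cMapPair_eq_iff hd).mp (congrArg Prod.snd huv)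
  subst hY
  simp only [Set.mem_compl_iff, Set.mem_union] at h1
  tauto

/-- Equally labelled arcs of `[X,Z]` arc-induce a complete bipartite subgraph. -/
def IsLabelBiclique (G : LDMG V A L) (X Z : Set V) : Prop :=
  ∀ a b, (G.FromTo X Z a ∨ G.FromTo Z X a) → (G.FromTo X Z b ∨ G.FromTo Z X b) →
    G.lab a = G.lab b → ∃ c, G.mu c = ((G.mu a).1, (G.mu b).2) ∧ G.lab c = G.lab a

/-- Hypotheses (i)–(vi), in this order, on a partition `X₁, X₂, Y` of the vertices. -/
structure IsSecondDecomposition (G : LDMG V A L) (X1 X2 Y : Set V) : Prop where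
  disjoint : Disjoint X1 X2
  compl_eq : Y = (X1 ∪ X2)ᶜ
  biclique_X1_Y : G.IsLabelBiclique X1 Y
  biclique_Y_X2 : G.IsLabelBiclique Y X2
  label_sep : ∀ a b, (G.FromTo X1 X2 a ∨ G.FromTo X2 X1 a) →
    ((G.FromTo X1 Y b ∨ G.FromTo Y X1 b) ∨ (G.FromTo Y X2 b ∨ G.FromTo X2 Y b)) →
    G.lab a ≠ G.lab b
  sync : ∀ a b, (¬ G.FromTo X1 X1 a ∧ ¬ G.FromTo X2 X2 a) → ¬ G.FromTo Y Y b →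
    G.lab a = G.lab b → ∀ c, c = a ∨ c = b →
      (G.FromTo X1 Y c ∨ G.FromTo Y X1 c) ∨ (G.FromTo Y X2 c ∨ G.FromTo X2 Y c) ∨
        (G.FromTo X1 X2 c ∨ G.FromTo X2 X1 c)
  source_mem : ∀ v, G.InDegZero v → v ∈ X1
  not_fromTo_Y_X1 : ∀ a, ¬ G.FromTo Y X1 a
  not_fromTo_X2_Y : ∀ a, ¬ G.FromTo X2 Y a
  not_fromTo_X2_X1 : ∀ a, ¬ G.FromTo X2 X1 a

def IsForwardCut (G : LDMG V A L) (X1 X2 Y : Set V) (a : A) : Prop :=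
  G.FromTo X1 Y a ∨ G.FromTo Y X2 a ∨ G.FromTo X1 X2 a

namespace IsSecondDecomposition

variable {G : LDMG V A L} {X1 X2 Y : Set V} {v : V}

theorem mem_Y_iff (h : G.IsSecondDecomposition X1 X2 Y) : v ∈ Y ↔ v ∉ X1 ∧ v ∉ X2 := by
  rw [h.compl_eq, Set.mem_compl_iff, Set.mem_union, not_or]

theorem notMem_X2_of_mem_X1 (h : G.IsSecondDecomposition X1 X2 Y) (hv : v ∈ X1) : v ∉ X2 :=
  Set.disjoint_left.mp h.disjoint hv

theorem mem_trichotomy (h : G.IsSecondDecomposition X1 X2 Y) (v : V) :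
    (v ∈ X1 ∧ v ∉ X2 ∧ v ∉ Y) ∨ (v ∉ X1 ∧ v ∈ X2 ∧ v ∉ Y) ∨ (v ∉ X1 ∧ v ∉ X2 ∧ v ∈ Y) := by
  have := h.notMem_X2_of_mem_X1 (v := v)
  rw [h.mem_Y_iff]
  tauto

theorem isForwardCut_of_sync (h : G.IsSecondDecomposition X1 X2 Y) {a b : A}
    (ha₁ : ¬ G.FromTo X1 X1 a) (ha₂ : ¬ G.FromTo X2 X2 a) (hb : ¬ G.FromTo Y Y b)
    (hl : G.lab a = G.lab b) : G.IsForwardCut X1 X2 Y a ∧ G.IsForwardCut X1 X2 Y b := by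
  have hforward : ∀ c, (G.FromTo X1 Y c ∨ G.FromTo Y X1 c) ∨
      (G.FromTo Y X2 c ∨ G.FromTo X2 Y c) ∨ (G.FromTo X1 X2 c ∨ G.FromTo X2 X1 c) →
      G.IsForwardCut X1 X2 Y c := fun c hc => by
    have := h.not_fromTo_Y_X1 c
    have := h.not_fromTo_X2_Y c
    have := h.not_fromTo_X2_X1 c
    unfold IsForwardCut
    tauto
  exact ⟨hforward a (h.sync a b ⟨ha₁, ha₂⟩ hb hl a (Or.inl rfl)),
    hforward b (h.sync a b ⟨ha₁, ha₂⟩ hb hl b (Or.inr rfl))⟩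

theorem not_isForwardCut_of_fromTo_self (h : G.IsSecondDecomposition X1 X2 Y) {a : A}
    (ha : G.FromTo X1 X1 a ∨ G.FromTo X2 X2 a ∨ G.FromTo Y Y a) : ¬ G.IsForwardCut X1 X2 Y a := by
  rcases h.mem_trichotomy (G.mu a).1 with h₁ | h₁ | h₁ <;>
    rcases h.mem_trichotomy (G.mu a).2 with h₂ | h₂ | h₂ <;>
    simp_all [IsForwardCut, FromTo]

theorem not_hasLab_contractPair (h : G.IsSecondDecomposition X1 X2 Y) {a : A}
    (ha : G.FromTo X1 X1 a ∨ G.FromTo X2 X2 a) :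
    ¬ (G.contractPair X1 X2).HasLab (G.lab a) := by
  rw [contractPair_hasLab_iff h.disjoint]
  rintro ⟨b, hb₁, hb₂, hl⟩
  have haY : ¬ G.FromTo Y Y a := by
    rcases h.mem_trichotomy (G.mu a).1 with h₁ | h₁ | h₁ <;> simp_all [FromTo]
  exact h.not_isForwardCut_of_fromTo_self (ha.imp_right Or.inl) (h.isForwardCut_of_sync hb₁ hb₂ haY hl).2

theorem not_hasLab_contract (h : G.IsSecondDecomposition X1 X2 Y) {a : A}
    (ha : G.FromTo Y Y a) : ¬ (G.contract Y).HasLab (G.lab a) := by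
  rw [contract_hasLab_iff]
  rintro ⟨b, hb, hl⟩
  have ha₁₂ : ¬ G.FromTo X1 X1 a ∧ ¬ G.FromTo X2 X2 a := by
    rcases h.mem_trichotomy (G.mu a).1 with h₁ | h₁ | h₁ <;> simp_all [FromTo]
  exact h.not_isForwardCut_of_fromTo_self (Or.inr (Or.inr ha))
    (h.isForwardCut_of_sync ha₁₂.1 ha₁₂.2 hb hl.symm).1

theorem mem_of_isForwardCut (h : G.IsSecondDecomposition X1 X2 Y) {c : A} (hc : G.IsForwardCut X1 X2 Y c) :
    ((G.mu c).1 ∈ X1 ∧ (G.mu c).2 ∉ X1) ∨ ((G.mu c).1 ∈ Y ∧ (G.mu c).2 ∈ X2) := by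
  rcases hc with hc | hc | hc
  · exact Or.inl ⟨hc.1, (h.mem_Y_iff.mp hc.2).1⟩
  · exact Or.inr hc
  · exact Or.inl ⟨hc.1, fun h₁ => h.notMem_X2_of_mem_X1 h₁ hc.2⟩

theorem exists_arc_of_isForwardCut (h : G.IsSecondDecomposition X1 X2 Y) {c₁ c₂ : A} {t : V}
    (hc₁ : G.IsForwardCut X1 X2 Y c₁) (hc₂ : G.IsForwardCut X1 X2 Y c₂) (hl : G.lab c₁ = G.lab c₂)
    (ht₁ : cMap Y (G.mu c₁).1 = cMap Y t) (ht₂ : cMapPair X1 X2 (G.mu c₂).1 = cMapPair X1 X2 t) :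
    ∃ a, (G.mu a).1 = t ∧
      embed X1 X2 Y (G.mu a).2 = (cMap Y (G.mu c₁).2, cMapPair X1 X2 (G.mu c₂).2) ∧
      G.lab a = G.lab c₁ := by
  rcases h.mem_of_isForwardCut hc₁ with h₁ | h₁ <;> rcases h.mem_of_isForwardCut hc₂ with h₂ | h₂
  · -- by (iii), both arcs are in `[X₁,Y]` or both are in `[X₁,X₂]`
    have ht : (G.mu c₁).1 = t := eq_of_cMap_eq (fun h' => (h.mem_Y_iff.mp h').1 h₁.1) ht₁
    by_cases hX₂ : (G.mu c₁).2 ∈ X2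
    · have hc₂X₂ : (G.mu c₂).2 ∈ X2 := by
        by_contra h'
        exact h.label_sep c₁ c₂ (Or.inl ⟨h₁.1, hX₂⟩)
          (Or.inl (Or.inl ⟨h₂.1, h.mem_Y_iff.mpr ⟨h₂.2, h'⟩⟩)) hl
      refine ⟨c₁, ht, ?_, rfl⟩
      rw [embed, (cMapPair_eq_iff h.disjoint).mpr (Or.inr (Or.inl ⟨hX₂, hc₂X₂⟩))]
    · have hc₁Y : (G.mu c₁).2 ∈ Y := h.mem_Y_iff.mpr ⟨h₁.2, hX₂⟩
      have hc₂Y : (G.mu c₂).2 ∈ Y := by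
        refine h.mem_Y_iff.mpr ⟨h₂.2, fun h' => ?_⟩
        exact h.label_sep c₂ c₁ (Or.inl ⟨h₂.1, h'⟩) (Or.inl (Or.inl ⟨h₁.1, hc₁Y⟩)) hl.symm
      obtain ⟨c, hc, hcl⟩ :=
        h.biclique_X1_Y c₁ c₂ (Or.inl ⟨h₁.1, hc₁Y⟩) (Or.inl ⟨h₂.1, hc₂Y⟩) hl
      refine ⟨c, by rw [hc, ht], ?_, hcl⟩
      rw [hc, embed, cMap_eq_cMap_iff.mpr (Or.inl ⟨hc₂Y, hc₁Y⟩)]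
  · have hY₂ := h.mem_Y_iff.mp h₂.1
    have ht : (G.mu c₂).1 = t := eq_of_cMapPair_eq h.disjoint hY₂.1 hY₂.2 ht₂
    have ht' : (G.mu c₁).1 = t := eq_of_cMap_eq (fun h' => (h.mem_Y_iff.mp h').1 h₁.1) ht₁
    exact absurd (ht' ▸ h₁.1) (ht ▸ hY₂.1)
  · exact absurd (mem_X1_of_cMapPair_eq h₂.1 ht₂) (h.mem_Y_iff.mp (mem_of_cMap_eq h₁.1 ht₁)).1
  · have hY₂ := h.mem_Y_iff.mp h₂.1
    have ht : (G.mu c₂).1 = t := eq_of_cMapPair_eq h.disjoint hY₂.1 hY₂.2 ht₂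
    obtain ⟨c, hc, hcl⟩ := h.biclique_Y_X2 c₂ c₁ (Or.inl h₂) (Or.inl h₁) hl.symm
    refine ⟨c, by rw [hc, ht], ?_, hcl.trans hl.symm⟩
    rw [hc, embed, (cMapPair_eq_iff h.disjoint).mpr (Or.inr (Or.inl ⟨h₁.2, h₂.2⟩))]

theorem exists_inter_arc (h : G.IsSecondDecomposition X1 X2 Y) (a : A) :
    ∃ x, ((G.contract Y).inter (G.contractPair X1 X2)).mu x =
        (embed X1 X2 Y (G.mu a).1, embed X1 X2 Y (G.mu a).2) ∧
      ((G.contract Y).inter (G.contractPair X1 X2)).lab x = G.lab a := by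
  by_cases hYY : G.FromTo Y Y a
  · have h₁₂ : ¬ G.FromTo X1 X1 a ∧ ¬ G.FromTo X2 X2 a := by
      rcases h.mem_trichotomy (G.mu a).1 with h₁ | h₁ | h₁ <;> simp_all [FromTo]
    obtain ⟨β, hβ, hβl⟩ := exists_contractPair_arc_of_arc h.disjoint h₁₂.1 h₁₂.2
    refine ⟨Sum.inr (Sum.inl ⟨(cMap Y (G.mu a).1, β), hβl ▸ h.not_hasLab_contract hYY⟩), ?_, hβl⟩
    change ((_, ((G.contractPair X1 X2).mu β).1), (_, ((G.contractPair X1 X2).mu β).2)) = _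
    rw [hβ, embed, embed, cMap_of_mem hYY.1, cMap_of_mem hYY.2]
  by_cases hX : G.FromTo X1 X1 a ∨ G.FromTo X2 X2 a
  · refine ⟨Sum.inl ⟨(Quotient.mk _ ⟨a, hYY⟩, cMapPair X1 X2 (G.mu a).1),
      h.not_hasLab_contractPair hX⟩, ?_, rfl⟩
    have : cMapPair X1 X2 (G.mu a).1 = cMapPair X1 X2 (G.mu a).2 :=
      (cMapPair_eq_iff h.disjoint).mpr (hX.imp_right Or.inl)
    change ((_, cMapPair X1 X2 (G.mu a).1), (_, cMapPair X1 X2 (G.mu a).1)) = _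
    rw [embed, embed, ← this]
    rfl
  · rw [not_or] at hX
    obtain ⟨β, hβ, hβl⟩ := exists_contractPair_arc_of_arc h.disjoint hX.1 hX.2
    refine ⟨Sum.inr (Sum.inr ⟨(Quotient.mk _ ⟨a, hYY⟩, β), hβl.symm⟩), ?_, rfl⟩
    change ((_, ((G.contractPair X1 X2).mu β).1), (_, ((G.contractPair X1 X2).mu β).2)) = _
    rw [hβ]
    rfl

theorem exists_arc_of_inter_arc (h : G.IsSecondDecomposition X1 X2 Y)
    (x : InterArc (G.contract Y) (G.contractPair X1 X2)) {t : V}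
    (ht : (((G.contract Y).inter (G.contractPair X1 X2)).mu x).1 = embed X1 X2 Y t) :
    ∃ a, (G.mu a).1 = t ∧
      (((G.contract Y).inter (G.contractPair X1 X2)).mu x).2 = embed X1 X2 Y (G.mu a).2 ∧
      G.lab a = ((G.contract Y).inter (G.contractPair X1 X2)).lab x := by
  rcases x with ⟨⟨α, q⟩, hα⟩ | ⟨⟨p, β⟩, hβ⟩ | ⟨⟨α, β⟩, hl⟩
  · obtain ⟨c, hcY, rfl⟩ := exists_contract_arc α
    have hc : G.FromTo X1 X1 c ∨ G.FromTo X2 X2 c := by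
      by_contra hc
      rw [not_or] at hc
      exact hα ((contractPair_hasLab_iff h.disjoint).mpr ⟨c, hc.1, hc.2, rfl⟩)
    have hcY₁ : (G.mu c).1 ∉ Y := fun h' =>
      hc.elim (fun h'' => (h.mem_Y_iff.mp h').1 h''.1) fun h'' => (h.mem_Y_iff.mp h').2 h''.1
    have hct : (G.mu c).1 = t := eq_of_cMap_eq hcY₁ (congrArg Prod.fst ht)
    have hq : q = cMapPair X1 X2 t := congrArg Prod.snd ht
    refine ⟨c, hct, ?_, rfl⟩
    change (cMap Y (G.mu c).2, q) = (cMap Y (G.mu c).2, cMapPair X1 X2 (G.mu c).2)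
    rw [hq, ← hct, (cMapPair_eq_iff h.disjoint).mpr (hc.imp_right Or.inl)]
  · obtain ⟨c, hc₁, hc₂, hmu, hlab⟩ := exists_arc_of_contractPair_arc h.disjoint β
    have hc : G.FromTo Y Y c := by
      by_contra hc
      exact hβ (contract_hasLab_iff.mpr ⟨c, hc, hlab.symm⟩)
    change (p, ((G.contractPair X1 X2).mu β).1) = _ at ht
    rw [hmu] at ht
    have hY₁ := h.mem_Y_iff.mp hc.1
    have hct : (G.mu c).1 = t := eq_of_cMapPair_eq h.disjoint hY₁.1 hY₁.2 (congrArg Prod.snd ht)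
    have hp : p = cMap Y t := congrArg Prod.fst ht
    refine ⟨c, hct, ?_, hlab.symm⟩
    change (p, ((G.contractPair X1 X2).mu β).2) = _
    rw [hmu, hp, ← hct, embed, cMap_eq_cMap_iff.mpr (Or.inl hc)]
  · obtain ⟨c₁, hc₁, rfl⟩ := exists_contract_arc α
    obtain ⟨c₂, hc₂X₁, hc₂X₂, hmu, hlab⟩ := exists_arc_of_contractPair_arc h.disjoint β
    have hl' : G.lab c₂ = G.lab c₁ := hlab.symm.trans hl.symm
    obtain ⟨hcut₂, hcut₁⟩ := h.isForwardCut_of_sync hc₂X₁ hc₂X₂ hc₁ hl'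
    change (cMap Y (G.mu c₁).1, ((G.contractPair X1 X2).mu β).1) = _ at ht
    rw [hmu] at ht
    obtain ⟨a, hat, ha, hal⟩ := h.exists_arc_of_isForwardCut hcut₁ hcut₂ hl'.symm
      (congrArg Prod.fst ht) (congrArg Prod.snd ht)
    refine ⟨a, hat, ?_, hal⟩
    change (cMap Y (G.mu c₁).2, ((G.contractPair X1 X2).mu β).2) = _
    rw [hmu, ha]

theorem exists_arc_iff (h : G.IsSecondDecomposition X1 X2 Y) {u v : V} {ℓ : L} :
    (∃ a, G.mu a = (u, v) ∧ G.lab a = ℓ) ↔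
      ∃ x, ((G.contract Y).inter (G.contractPair X1 X2)).mu x =
          (embed X1 X2 Y u, embed X1 X2 Y v) ∧
        ((G.contract Y).inter (G.contractPair X1 X2)).lab x = ℓ := by
  constructor
  · rintro ⟨a, ha, rfl⟩
    obtain ⟨x, hx, hxl⟩ := h.exists_inter_arc a
    exact ⟨x, by rw [hx, ha], hxl⟩
  · rintro ⟨x, hx, rfl⟩
    obtain ⟨a, hau, hav, hal⟩ := h.exists_arc_of_inter_arc x (congrArg Prod.fst hx)
    have hv := embed_injective h.disjoint h.compl_eq (hav.symm.trans (congrArg Prod.snd hx))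
    exact ⟨a, Prod.ext hau hv, hal⟩

theorem tail_mem_X1 (h : G.IsSecondDecomposition X1 X2 Y) {a : A} (ha : (G.mu a).2 ∈ X1) :
    (G.mu a).1 ∈ X1 := by
  by_contra h₁
  by_cases h₂ : (G.mu a).1 ∈ X2
  · exact h.not_fromTo_X2_X1 a ⟨h₂, ha⟩
  · exact h.not_fromTo_Y_X1 a ⟨h.mem_Y_iff.mpr ⟨h₁, h₂⟩, ha⟩

theorem embed_notMem_vrspRemoved (h : G.IsSecondDecomposition X1 X2 Y) (v : V) :
    embed X1 X2 Y v ∉ vrspRemoved (G.contract Y) (G.contractPair X1 X2) := by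
  refine Set.disjoint_left.mp (disjoint_vrspRemoved ?_) (Set.mem_range_self v)
  rintro _ ⟨v, rfl⟩ hpos
  by_cases hv : G.InDegZero v
  · exfalso
    have hv₁ := h.source_mem v hv
    change PosLevelBox _ _ (cMap Y v, cMapPair X1 X2 v) at hpos
    refine (posLevelBox_iff.mp hpos).elim (· (hv.contract fun h' => ?_)) (· ?_)
    · exact (h.mem_Y_iff.mp h').1 hv₁
    · rw [cMapPair_eq_xTilde₁_iff.mpr hv₁]
      exact inDegZero_xTilde₁ h.disjoint fun a => h.tail_mem_X1
  · obtain ⟨a, rfl⟩ : ∃ a, (G.mu a).2 = v := by simpa [InDegZero] using hv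
    obtain ⟨x, hx, -⟩ := h.exists_inter_arc a
    exact ⟨x, by rw [hx], by rw [hx]; exact Set.mem_range_self _⟩

theorem exists_isGrading_contract (h : G.IsSecondDecomposition X1 X2 Y) {r : V → ℕ} {N : ℕ}
    (hr : G.IsGrading r) (hN : ∀ v, r v ≤ N) : ∃ r₁, (G.contract Y).IsGrading r₁ := by
  classical
  -- `X₁` below `ỹ` below `X₂`: by (vi), arcs between the parts only go up in this order
  let f : V → ℕ := fun v => if v ∈ X1 then r v else if v ∈ Y then N + 1 else N + 2 + r v
  have hfY : ∀ v ∈ Y, f v = N + 1 := fun v hv => by simp [f, hv, (h.mem_Y_iff.mp hv).1]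
  refine ⟨CVertex.lift f (N + 1), isGrading_contract fun a ha => ?_⟩
  rw [CVertex.lift_cMap hfY, CVertex.lift_cMap hfY]
  have := hr a
  have := hN (G.mu a).1
  have := hN (G.mu a).2
  have := h.not_fromTo_Y_X1 a
  have := h.not_fromTo_X2_Y a
  have := h.not_fromTo_X2_X1 a
  rcases h.mem_trichotomy (G.mu a).1 with h₁ | h₁ | h₁ <;>
    rcases h.mem_trichotomy (G.mu a).2 with h₂ | h₂ | h₂ <;>
    simp_all [f, FromTo] <;> omega

theorem exists_isGrading_contractPair (h : G.IsSecondDecomposition X1 X2 Y) {r : V → ℕ}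
    {N : ℕ} (hr : G.IsGrading r) (hN : ∀ v, r v ≤ N) :
    ∃ r₂, (G.contractPair X1 X2).IsGrading r₂ := by
  classical
  -- `x̃₁` below `Y` below `x̃₂`, as in `exists_isGrading_contract`
  let f : V → ℕ := fun v => if v ∈ X1 then 0 else if v ∈ X2 then N + 2 else r v + 1
  have hf₁ : ∀ v ∈ X1, f v = 0 := fun v hv => if_pos hv
  have hf₂ : ∀ w ∈ imgIn X1 X2, CVertex.lift f 0 w = N + 2 := by
    rintro _ ⟨v, hv₁, hv₂, rfl⟩
    exact (if_neg hv₁).trans (if_pos hv₂)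
  refine ⟨CVertex.lift (CVertex.lift f 0) (N + 2), fun β => ?_⟩
  obtain ⟨a, ha₁, ha₂, hmu, -⟩ := exists_arc_of_contractPair_arc h.disjoint β
  rw [hmu]
  simp only [cMapPair, CVertex.lift_cMap hf₂, CVertex.lift_cMap hf₁]
  have := hr a
  have := hN (G.mu a).1
  have := hN (G.mu a).2
  have := h.not_fromTo_Y_X1 a
  have := h.not_fromTo_X2_Y a
  have := h.not_fromTo_X2_X1 a
  rcases h.mem_trichotomy (G.mu a).1 with h₁ | h₁ | h₁ <;>
    rcases h.mem_trichotomy (G.mu a).2 with h₂ | h₂ | h₂ <;>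
    simp_all [f, FromTo]

theorem eq_xTilde₁_of_inDegZero (h : G.IsSecondDecomposition X1 X2 Y) {r : V → ℕ}
    (hr : G.IsGrading r) (hX₂ : X2.Nonempty) {q : CVertex (imgIn X1 X2)}
    (hq : (G.contractPair X1 X2).InDegZero q) : q = xTilde₁ X1 X2 := by
  rcases q with ⟨w | ⟨⟩, hw⟩ | ⟨⟩
  · exfalso
    have hw₂ : w.1 ∉ X2 := fun h' => hw ⟨w.1, w.2, h', rfl⟩
    obtain ⟨a, ha⟩ : ∃ a, (G.mu a).2 = w.1 := by simpa [InDegZero] using mt (h.source_mem w.1) w.2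
    obtain ⟨β, hβ, -⟩ := exists_contractPair_arc_of_arc h.disjoint
      (fun h' => w.2 (ha ▸ h'.2)) (fun h' => hw₂ (ha ▸ h'.2))
    refine hq β ?_
    rw [hβ, ha]
    exact (congrArg (cMap _) (cMap_of_notMem w.2)).trans (cMap_of_notMem hw)
  · exact (cMap_of_notMem inr_notMem_imgIn).symm
  · exfalso
    obtain ⟨a, ha₁, ha₂⟩ := hr.exists_arc_into hX₂ fun v hv =>
      mt (h.source_mem v) fun h' => h.notMem_X2_of_mem_X1 h' hv
    obtain ⟨β, hβ, -⟩ := exists_contractPair_arc_of_arc h.disjoint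
      (fun h' => h.notMem_X2_of_mem_X1 h'.2 ha₂) (fun h' => ha₁ h'.1)
    exact hq β (by rw [hβ]; exact (cMapPair_eq_inr_iff h.disjoint).mpr ha₂)

theorem exists_cMap_eq_of_inDegZero (h : G.IsSecondDecomposition X1 X2 Y) {r : V → ℕ}
    (hr : G.IsGrading r) (hY : Y.Nonempty) {p : CVertex Y}
    (hp : (G.contract Y).InDegZero p) : ∃ u ∈ X1, cMap Y u = p := by
  rcases p with ⟨u, hu⟩ | ⟨⟩
  · refine ⟨u, ?_, cMap_of_notMem hu⟩
    by_contra hu₁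
    obtain ⟨a, ha⟩ : ∃ a, (G.mu a).2 = u := by simpa [InDegZero] using mt (h.source_mem u) hu₁
    refine not_inDegZero_contract (a := a) (fun h' => hu (ha ▸ h'.2)) ?_
    rw [ha, cMap_of_notMem hu]
    exact hp
  · exfalso
    obtain ⟨a, ha₁, ha₂⟩ := hr.exists_arc_into hY fun v hv =>
      mt (h.source_mem v) (h.mem_Y_iff.mp hv).1
    refine not_inDegZero_contract (a := a) (fun h' => ha₁ h'.1) ?_
    rw [cMap_of_mem ha₂]
    exact hp

theorem posLevelBox_of_notMem_range (h : G.IsSecondDecomposition X1 X2 Y) {r : V → ℕ}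
    (hr : G.IsGrading r) (hX₂ : X2.Nonempty) (hY : Y.Nonempty)
    {z : CVertex Y × CVertex (imgIn X1 X2)} (hz : z ∉ Set.range (embed X1 X2 Y)) :
    PosLevelBox (G.contract Y) (G.contractPair X1 X2) z := by
  obtain ⟨p, q⟩ := z
  rw [posLevelBox_iff]
  by_contra hpq
  rw [not_or, not_not, not_not] at hpq
  obtain ⟨u, hu, rfl⟩ := h.exists_cMap_eq_of_inDegZero hr hY hpq.1
  rw [h.eq_xTilde₁_of_inDegZero hr hX₂ hpq.2] at hz
  exact hz ⟨u, congrArg _ (cMapPair_eq_xTilde₁_iff.mpr hu)⟩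

theorem mem_vrspRemoved_of_notMem_range [Finite V] (h : G.IsSecondDecomposition X1 X2 Y)
    (hG : G.Acyclic) (hX₂ : X2.Nonempty) (hY : Y.Nonempty)
    {z : CVertex Y × CVertex (imgIn X1 X2)} (hz : z ∉ Set.range (embed X1 X2 Y)) :
    z ∈ vrspRemoved (G.contract Y) (G.contractPair X1 X2) := by
  obtain ⟨r, hr⟩ := exists_isGrading hG
  obtain ⟨N, hN⟩ := (Set.finite_range r).bddAbove
  obtain ⟨r₁, hr₁⟩ := h.exists_isGrading_contract hr fun v => hN ⟨v, rfl⟩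
  obtain ⟨r₂, hr₂⟩ := h.exists_isGrading_contractPair hr fun v => hN ⟨v, rfl⟩
  refine subset_vrspRemoved (hr₁.inter hr₂) (fun z => h.posLevelBox_of_notMem_range hr hX₂ hY)
    (fun x hx ⟨t, ht⟩ => hx ?_) hz
  obtain ⟨a, -, ha, -⟩ := h.exists_arc_of_inter_arc x ht.symm
  exact ⟨_, ha.symm⟩

end IsSecondDecomposition

end LDMG

theorem decomposition_two_general {V A L : Type} [Fintype V]
    (G : LDMG V A L) (hacyc : G.Acyclic)
    (X1 X2 Y : Set V) (hX2ne : X2.Nonempty) (hYne : Y.Nonempty)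
    (hdisj12 : Disjoint X1 X2) (hY : Y = (X1 ∪ X2)ᶜ)
    -- (i) equally-labelled arcs of [X1,Y] arc-induce a complete bipartite subgraph
    (hbip1 : ∀ a b : A,
      (((G.mu a).1 ∈ X1 ∧ (G.mu a).2 ∈ Y) ∨ ((G.mu a).1 ∈ Y ∧ (G.mu a).2 ∈ X1)) →
      (((G.mu b).1 ∈ X1 ∧ (G.mu b).2 ∈ Y) ∨ ((G.mu b).1 ∈ Y ∧ (G.mu b).2 ∈ X1)) →
      G.lab a = G.lab b →
      ∃ c : A, G.mu c = ((G.mu a).1, (G.mu b).2) ∧ G.lab c = G.lab a)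
    -- (ii) equally-labelled arcs of [Y,X2] arc-induce a complete bipartite subgraph
    (hbip2 : ∀ a b : A,
      (((G.mu a).1 ∈ Y ∧ (G.mu a).2 ∈ X2) ∨ ((G.mu a).1 ∈ X2 ∧ (G.mu a).2 ∈ Y)) →
      (((G.mu b).1 ∈ Y ∧ (G.mu b).2 ∈ X2) ∨ ((G.mu b).1 ∈ X2 ∧ (G.mu b).2 ∈ Y)) →
      G.lab a = G.lab b →
      ∃ c : A, G.mu c = ((G.mu a).1, (G.mu b).2) ∧ G.lab c = G.lab a)
    -- (iii) labels of [X1,X2] occur on no arc of [X1,Y] ∪ [Y,X2]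
    (hlabsep : ∀ a b : A,
      (((G.mu a).1 ∈ X1 ∧ (G.mu a).2 ∈ X2) ∨ ((G.mu a).1 ∈ X2 ∧ (G.mu a).2 ∈ X1)) →
      ((((G.mu b).1 ∈ X1 ∧ (G.mu b).2 ∈ Y) ∨ ((G.mu b).1 ∈ Y ∧ (G.mu b).2 ∈ X1)) ∨
       (((G.mu b).1 ∈ Y ∧ (G.mu b).2 ∈ X2) ∨ ((G.mu b).1 ∈ X2 ∧ (G.mu b).2 ∈ Y))) →
      G.lab a ≠ G.lab b)
    -- (iv) the arcs coming from [X1,Y] ∪ [Y,X2] ∪ [X1,X2] are the only synchronising arcs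
    --      of G/X1/X2 and G/Y
    (hsync : ∀ a b : A,
      (¬ ((G.mu a).1 ∈ X1 ∧ (G.mu a).2 ∈ X1) ∧ ¬ ((G.mu a).1 ∈ X2 ∧ (G.mu a).2 ∈ X2)) →
      ¬ ((G.mu b).1 ∈ Y ∧ (G.mu b).2 ∈ Y) →
      G.lab a = G.lab b →
      (∀ c : A, c = a ∨ c = b →
        (((G.mu c).1 ∈ X1 ∧ (G.mu c).2 ∈ Y) ∨ ((G.mu c).1 ∈ Y ∧ (G.mu c).2 ∈ X1)) ∨
        (((G.mu c).1 ∈ Y ∧ (G.mu c).2 ∈ X2) ∨ ((G.mu c).1 ∈ X2 ∧ (G.mu c).2 ∈ Y)) ∨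
        (((G.mu c).1 ∈ X1 ∧ (G.mu c).2 ∈ X2) ∨ ((G.mu c).1 ∈ X2 ∧ (G.mu c).2 ∈ X1))))
    -- (v) S'(G) ⊆ X1
    (hsource : ∀ v : V, G.InDegZero v → v ∈ X1)
    -- (vi) [X1,Y], [Y,X2] and [X1,X2] have no backward arcs
    (hnoback1 : ∀ a : A, ¬ ((G.mu a).1 ∈ Y ∧ (G.mu a).2 ∈ X1))
    (hnoback2 : ∀ a : A, ¬ ((G.mu a).1 ∈ X2 ∧ (G.mu a).2 ∈ Y))
    (hnoback3 : ∀ a : A, ¬ ((G.mu a).1 ∈ X2 ∧ (G.mu a).2 ∈ X1)) :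
    ∃ φ : V ≃ LDMG.VrspV (G.contract Y) ((G.contract X1).contract (LDMG.imgIn X1 X2)),
      (∀ v : V,
        (Subtype.val (φ v) :
            LDMG.CVertex Y × LDMG.CVertex (LDMG.imgIn X1 X2)) =
          (LDMG.cMap Y v, LDMG.cMap (LDMG.imgIn X1 X2) (LDMG.cMap X1 v))) ∧
      (∀ (u v : V) (ℓ : L),
        (∃ a, G.mu a = (u, v) ∧ G.lab a = ℓ) ↔
        (∃ b, ((G.contract Y).vrsp ((G.contract X1).contract (LDMG.imgIn X1 X2))).mu b =
            (φ u, φ v) ∧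
          ((G.contract Y).vrsp ((G.contract X1).contract (LDMG.imgIn X1 X2))).lab b = ℓ)) := by
  have h : G.IsSecondDecomposition X1 X2 Y :=
    ⟨hdisj12, hY, hbip1, hbip2, hlabsep, hsync, hsource, hnoback1, hnoback2, hnoback3⟩
  let φ : V → LDMG.VrspV (G.contract Y) (G.contractPair X1 X2) :=
    fun v => ⟨LDMG.embed X1 X2 Y v, h.embed_notMem_vrspRemoved v⟩
  have hφ : Function.Bijective φ := by
    refine ⟨fun u v huv => LDMG.embed_injective hdisj12 hY (congrArg Subtype.val huv), ?_⟩
    rintro ⟨z, hz⟩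
    obtain ⟨v, rfl⟩ : z ∈ Set.range (LDMG.embed X1 X2 Y) := by
      by_contra hz'
      exact hz (h.mem_vrspRemoved_of_notMem_range hacyc hX2ne hYne hz')
    exact ⟨v, rfl⟩
  exact ⟨Equiv.ofBijective φ hφ, fun v => rfl, fun u v ℓ =>
    h.exists_arc_iff.trans (LDMG.exists_vrsp_arc_iff _ _).symm⟩

/-- Second decomposition theorem (relaxed): under the stated hypotheses on the three
disjoint nonempty sets `X₁`, `X₂`, `Y = V(G) ∖ (X₁ ∪ X₂)`,
`G ≅ (G/Y) ⊟ (G/X₁/X₂)` via `u ∈ X₁ ↦ (u, x̃₁)`, `v ∈ X₂ ↦ (v, x̃₂)`, `w ∈ Y ↦ (ỹ, w)`. -/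
theorem decomposition_two {V A L : Type} [Fintype V] [Fintype A]
    (G : LDMG V A L) (hacyc : G.Acyclic)
    (X1 X2 Y : Set V) (hX1ne : X1.Nonempty) (hX2ne : X2.Nonempty) (hYne : Y.Nonempty)
    (hdisj12 : Disjoint X1 X2) (hY : Y = (X1 ∪ X2)ᶜ)
    -- (i) equally-labelled arcs of [X1,Y] arc-induce a complete bipartite subgraph
    (hbip1 : ∀ a b : A,
      (((G.mu a).1 ∈ X1 ∧ (G.mu a).2 ∈ Y) ∨ ((G.mu a).1 ∈ Y ∧ (G.mu a).2 ∈ X1)) →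
      (((G.mu b).1 ∈ X1 ∧ (G.mu b).2 ∈ Y) ∨ ((G.mu b).1 ∈ Y ∧ (G.mu b).2 ∈ X1)) →
      G.lab a = G.lab b →
      ∃ c : A, G.mu c = ((G.mu a).1, (G.mu b).2) ∧ G.lab c = G.lab a)
    -- (ii) equally-labelled arcs of [Y,X2] arc-induce a complete bipartite subgraph
    (hbip2 : ∀ a b : A,
      (((G.mu a).1 ∈ Y ∧ (G.mu a).2 ∈ X2) ∨ ((G.mu a).1 ∈ X2 ∧ (G.mu a).2 ∈ Y)) →
      (((G.mu b).1 ∈ Y ∧ (G.mu b).2 ∈ X2) ∨ ((G.mu b).1 ∈ X2 ∧ (G.mu b).2 ∈ Y)) →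
      G.lab a = G.lab b →
      ∃ c : A, G.mu c = ((G.mu a).1, (G.mu b).2) ∧ G.lab c = G.lab a)
    -- (iii) labels of [X1,X2] occur on no arc of [X1,Y] ∪ [Y,X2]
    (hlabsep : ∀ a b : A,
      (((G.mu a).1 ∈ X1 ∧ (G.mu a).2 ∈ X2) ∨ ((G.mu a).1 ∈ X2 ∧ (G.mu a).2 ∈ X1)) →
      ((((G.mu b).1 ∈ X1 ∧ (G.mu b).2 ∈ Y) ∨ ((G.mu b).1 ∈ Y ∧ (G.mu b).2 ∈ X1)) ∨
       (((G.mu b).1 ∈ Y ∧ (G.mu b).2 ∈ X2) ∨ ((G.mu b).1 ∈ X2 ∧ (G.mu b).2 ∈ Y))) →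
      G.lab a ≠ G.lab b)
    -- (iv) the arcs coming from [X1,Y] ∪ [Y,X2] ∪ [X1,X2] are the only synchronising arcs
    --      of G/X1/X2 and G/Y
    (hsync : ∀ a b : A,
      (¬ ((G.mu a).1 ∈ X1 ∧ (G.mu a).2 ∈ X1) ∧ ¬ ((G.mu a).1 ∈ X2 ∧ (G.mu a).2 ∈ X2)) →
      ¬ ((G.mu b).1 ∈ Y ∧ (G.mu b).2 ∈ Y) →
      G.lab a = G.lab b →
      (∀ c : A, c = a ∨ c = b →
        (((G.mu c).1 ∈ X1 ∧ (G.mu c).2 ∈ Y) ∨ ((G.mu c).1 ∈ Y ∧ (G.mu c).2 ∈ X1)) ∨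
        (((G.mu c).1 ∈ Y ∧ (G.mu c).2 ∈ X2) ∨ ((G.mu c).1 ∈ X2 ∧ (G.mu c).2 ∈ Y)) ∨
        (((G.mu c).1 ∈ X1 ∧ (G.mu c).2 ∈ X2) ∨ ((G.mu c).1 ∈ X2 ∧ (G.mu c).2 ∈ X1))))
    -- (v) S'(G) ⊆ X1
    (hsource : ∀ v : V, G.InDegZero v → v ∈ X1)
    -- (vi) [X1,Y], [Y,X2] and [X1,X2] have no backward arcs
    (hnoback1 : ∀ a : A, ¬ ((G.mu a).1 ∈ Y ∧ (G.mu a).2 ∈ X1))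
    (hnoback2 : ∀ a : A, ¬ ((G.mu a).1 ∈ X2 ∧ (G.mu a).2 ∈ Y))
    (hnoback3 : ∀ a : A, ¬ ((G.mu a).1 ∈ X2 ∧ (G.mu a).2 ∈ X1)) :
    ∃ φ : V ≃ LDMG.VrspV (G.contract Y) ((G.contract X1).contract (LDMG.imgIn X1 X2)),
      (∀ v : V,
        (Subtype.val (φ v) :
            LDMG.CVertex Y × LDMG.CVertex (LDMG.imgIn X1 X2)) =
          (LDMG.cMap Y v, LDMG.cMap (LDMG.imgIn X1 X2) (LDMG.cMap X1 v))) ∧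
      (∀ (u v : V) (ℓ : L),
        (∃ a, G.mu a = (u, v) ∧ G.lab a = ℓ) ↔
        (∃ b, ((G.contract Y).vrsp ((G.contract X1).contract (LDMG.imgIn X1 X2))).mu b =
            (φ u, φ v) ∧
          ((G.contract Y).vrsp ((G.contract X1).contract (LDMG.imgIn X1 X2))).lab b = ℓ)) :=
  decomposition_two_general G hacyc X1 X2 Y hX2ne hYne hdisj12 hY hbip1 hbip2 hlabsep hsync hsource
    hnoback1 hnoback2 hnoback3
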